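/- arXiv:2511.01184 — 2 statements merged into one kernel-verified Lean document; each statement's English description precedes it below -/
import Mathlib

section
/- Let n ≥ 2 and 2 ≤ k ≤ n+1. For any real numbers ξ_{ij}, 1 ≤ i < j ≤ k, with ξ_{ij} ≠ 0 for all i < j, there exist linearly independent vectors v_1, …, v_k ∈ ℝ^{2n} such that ⟨v_i, v_j⟩ = ξ_{ij} for all 1 ≤ i < j ≤ k. -/
/-!
Take a symplectic basis `e_a, f_a`. The vectors `v_j = e_j + ∑_{i<j} ξ_{ij} f_i`, with
`e_{k-1} := 0`, satisfy `⟨v_i, v_j⟩ = ξ_{ij}` for `i < j`: the `f`-parts pair to zero, and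
`⟨f_a, e_j⟩ = 0` for `a < i < j`. Pairing with `f_i` picks out the coefficient of `v_i` for
`i < k - 1`, while pairing with `e_{k-2}` kills every `v_j` except `v_{k-1}`, on which it is
`ξ_{k-2,k-1} ≠ 0`; so the `v_j` are linearly independent.
-/

open Matrix

noncomputable section

abbrev Pairs (k : ℕ) := {p : Fin k × Fin k // p.1 < p.2}

/-- The standard symplectic matrix `J_n` with block form `(0 Iₙ; -Iₙ 0)`. -/
def Jmat (n : ℕ) : Matrix (Fin (2*n)) (Fin (2*n)) ℝ :=
  fun i j => if (i : ℕ) + n = (j : ℕ) then 1 else if (j : ℕ) + n = (i : ℕ) then -1 else 0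

/-- The standard symplectic form `⟨v,w⟩ = vᵀ Jₙ w` on `ℝ^{2n}`. -/
def symp (n : ℕ) (v w : Fin (2*n) → ℝ) : ℝ := v ⬝ᵥ (Jmat n).mulVec w

open LinearMap (BilinForm)

section UpperCoeff

variable {K : Type*} [Zero K] {k : ℕ} (ξ : Pairs k → K)

def upperCoeff (i j : Fin k) : K :=
  if h : i < j then ξ ⟨(i, j), h⟩ else 0

lemma upperCoeff_of_lt {i j : Fin k} (h : i < j) : upperCoeff ξ i j = ξ ⟨(i, j), h⟩ :=
  dif_pos h

lemma upperCoeff_of_le {i j : Fin k} (h : j ≤ i) : upperCoeff ξ i j = 0 :=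
  dif_neg (not_lt.2 h)

end UpperCoeff

structure IsSymplecticFamily {K V ι : Type*} [CommRing K] [AddCommGroup V] [Module K V]
    [DecidableEq ι] (B : BilinForm K V) (e f : ι → V) : Prop where
  apply_e_e : ∀ a b, B (e a) (e b) = 0
  apply_f_f : ∀ a b, B (f a) (f b) = 0
  apply_e_f : ∀ a b, B (e a) (f b) = if a = b then 1 else 0
  apply_f_e : ∀ a b, B (f a) (e b) = if a = b then -1 else 0

lemma IsSymplecticFamily.comp {K V ι κ : Type*} [CommRing K] [AddCommGroup V] [Module K V]
    [DecidableEq ι] [DecidableEq κ] {B : BilinForm K V} {e f : ι → V}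
    (h : IsSymplecticFamily B e f) {g : κ → ι} (hg : Function.Injective g) :
    IsSymplecticFamily B (e ∘ g) (f ∘ g) where
  apply_e_e a b := h.apply_e_e (g a) (g b)
  apply_f_f a b := h.apply_f_f (g a) (g b)
  apply_e_f a b := by simp [h.apply_e_f, hg.eq_iff]
  apply_f_e a b := by simp [h.apply_f_e, hg.eq_iff]

section Realization

variable {K V : Type*} [CommRing K] [AddCommGroup V] [Module K V] {B : BilinForm K V}
  {m : ℕ} {e f : Fin (m + 1) → V}

variable (e f) in
def hyperbolicRealization (ξ : Pairs (m + 2) → K) (j : Fin (m + 2)) : V :=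
  Fin.lastCases 0 e j + ∑ a, upperCoeff ξ a.castSucc j • f a

lemma hyperbolicRealization_castSucc (ξ : Pairs (m + 2) → K) (a : Fin (m + 1)) :
    hyperbolicRealization e f ξ a.castSucc =
      e a + ∑ b, upperCoeff ξ b.castSucc a.castSucc • f b := by
  rw [hyperbolicRealization, Fin.lastCases_castSucc]

lemma hyperbolicRealization_last (ξ : Pairs (m + 2) → K) :
    hyperbolicRealization e f ξ (Fin.last _) =
      ∑ b, upperCoeff ξ b.castSucc (Fin.last _) • f b := by
  rw [hyperbolicRealization, Fin.lastCases_last, zero_add]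

namespace IsSymplecticFamily

variable (h : IsSymplecticFamily B e f)
include h

lemma apply_e_sum_smul_f (a : Fin (m + 1)) (c : Fin (m + 1) → K) :
    B (e a) (∑ b, c b • f b) = c a := by
  simp [h.apply_e_f]

lemma apply_sum_smul_f_e (a : Fin (m + 1)) (c : Fin (m + 1) → K) :
    B (∑ b, c b • f b) (e a) = -c a := by
  simp [h.apply_f_e]

lemma apply_sum_smul_f_f (a : Fin (m + 1)) (c : Fin (m + 1) → K) :
    B (∑ b, c b • f b) (f a) = 0 := by
  simp [h.apply_f_f]

lemma apply_sum_smul_f_sum_smul_f (c d : Fin (m + 1) → K) :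
    B (∑ b, c b • f b) (∑ b, d b • f b) = 0 := by
  simp [h.apply_f_f]

lemma apply_hyperbolicRealization (ξ : Pairs (m + 2) → K) (p : Pairs (m + 2)) :
    B (hyperbolicRealization e f ξ p.1.1) (hyperbolicRealization e f ξ p.1.2) = ξ p := by
  obtain ⟨⟨i, j⟩, hij⟩ := p
  induction i using Fin.lastCases with
  | last => exact absurd hij (Fin.not_lt.2 j.le_last)
  | cast a =>
    rw [hyperbolicRealization_castSucc, map_add, LinearMap.add_apply]
    induction j using Fin.lastCases with
    | last =>
      rw [hyperbolicRealization_last, h.apply_e_sum_smul_f, h.apply_sum_smul_f_sum_smul_f,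
        add_zero, upperCoeff_of_lt ξ hij]
    | cast b =>
      rw [hyperbolicRealization_castSucc, map_add, map_add, h.apply_e_e, h.apply_e_sum_smul_f,
        h.apply_sum_smul_f_e, h.apply_sum_smul_f_sum_smul_f, upperCoeff_of_lt ξ hij,
        upperCoeff_of_le ξ hij.le]
      ring

lemma apply_e_hyperbolicRealization (ξ : Pairs (m + 2) → K) (a : Fin (m + 1)) (j : Fin (m + 2)) :
    B (e a) (hyperbolicRealization e f ξ j) = upperCoeff ξ a.castSucc j := by
  induction j using Fin.lastCases with
  | last => rw [hyperbolicRealization_last, h.apply_e_sum_smul_f]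
  | cast b =>
    rw [hyperbolicRealization_castSucc, map_add, h.apply_e_e, h.apply_e_sum_smul_f, zero_add]

lemma apply_hyperbolicRealization_f (ξ : Pairs (m + 2) → K) (j : Fin (m + 2)) (a : Fin (m + 1)) :
    B (hyperbolicRealization e f ξ j) (f a) = if j = a.castSucc then 1 else 0 := by
  induction j using Fin.lastCases with
  | last =>
    rw [hyperbolicRealization_last, h.apply_sum_smul_f_f, if_neg (Fin.castSucc_ne_last a).symm]
  | cast b =>
    simp only [hyperbolicRealization_castSucc, map_add, LinearMap.add_apply, h.apply_e_f,
      h.apply_sum_smul_f_f, add_zero, Fin.castSucc_inj]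

end IsSymplecticFamily

end Realization

namespace IsSymplecticFamily

variable {K V : Type*} [Field K] [AddCommGroup V] [Module K V] {B : BilinForm K V}
  {m : ℕ} {e f : Fin (m + 1) → V}

lemma linearIndependent_hyperbolicRealization (h : IsSymplecticFamily B e f)
    (ξ : Pairs (m + 2) → K) (hξ : ∀ p, ξ p ≠ 0) :
    LinearIndependent K (hyperbolicRealization e f ξ) := by
  set ξ₀ := ξ ⟨((Fin.last m).castSucc, Fin.last (m + 1)), Fin.castSucc_lt_last _⟩
  let φ : Fin (m + 2) → Module.Dual K V :=
    Fin.lastCases (ξ₀⁻¹ • B (e (Fin.last m))) fun a ↦ B.flip (f a)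
  refine .of_pairwise_dual_eq_zero_one _ φ (fun i j hij ↦ ?_) fun i ↦ ?_
  · induction i using Fin.lastCases with
    | last =>
      have hj : j ≤ (Fin.last m).castSucc :=
        Fin.le_castSucc_iff.2 (Fin.lt_last_iff_ne_last.2 hij.symm)
      simp [φ, h.apply_e_hyperbolicRealization, upperCoeff_of_le ξ hj]
    | cast a => simp [φ, h.apply_hyperbolicRealization_f, Ne.symm hij]
  · induction i using Fin.lastCases with
    | last =>
      simp [φ, h.apply_e_hyperbolicRealization, upperCoeff_of_lt ξ (Fin.castSucc_lt_last _),
        ξ₀, hξ]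
    | cast a => simp [φ, h.apply_hyperbolicRealization_f]

theorem exists_linearIndependent_apply_eq (h : IsSymplecticFamily B e f)
    (ξ : Pairs (m + 2) → K) (hξ : ∀ p, ξ p ≠ 0) :
    ∃ v : Fin (m + 2) → V, LinearIndependent K v ∧
      ∀ p : Pairs (m + 2), B (v p.1.1) (v p.1.2) = ξ p :=
  ⟨_, h.linearIndependent_hyperbolicRealization ξ hξ, h.apply_hyperbolicRealization ξ⟩

end IsSymplecticFamily

lemma symp_eq_toBilin' (n : ℕ) (v w : Fin (2 * n) → ℝ) : symp n v w = toBilin' (Jmat n) v w :=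
  (toBilin'_apply' _ _ _).symm

lemma isSymplecticFamily_Jmat (n : ℕ) :
    IsSymplecticFamily (toBilin' (Jmat n))
      (fun a : Fin n ↦ Pi.single (⟨a, by omega⟩ : Fin (2 * n)) 1)
      (fun a : Fin n ↦ Pi.single (⟨n + a, by omega⟩ : Fin (2 * n)) 1) where
  apply_e_e a b := by simp [toBilin'_single, Jmat]; grind
  apply_f_f a b := by simp [toBilin'_single, Jmat]; grind
  apply_e_f a b := by simp [toBilin'_single, Jmat, Fin.ext_iff]; grind
  apply_f_e a b := by simp [toBilin'_single, Jmat, Fin.ext_iff]; grind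

theorem stmt16_general (n k : ℕ) (hk2 : 2 ≤ k) (hk : k ≤ n + 1)
    (ξ : Pairs k → ℝ) (hξ : ∀ p, ξ p ≠ 0) :
    ∃ v : Fin k → (Fin (2*n) → ℝ), LinearIndependent ℝ v ∧
      ∀ p : Pairs k, symp n (v p.1.1) (v p.1.2) = ξ p := by
  obtain ⟨m, rfl⟩ : ∃ m, k = m + 2 := ⟨k - 2, by omega⟩
  have hsymp := (isSymplecticFamily_Jmat n).comp (Fin.castLE_injective (by omega : m + 1 ≤ n))
  obtain ⟨v, hv, hvξ⟩ := hsymp.exists_linearIndependent_apply_eq ξ hξ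
  exact ⟨v, hv, fun p ↦ (symp_eq_toBilin' n _ _).trans (hvξ p)⟩

/-- For `n ≥ 2` and `2 ≤ k ≤ n+1`, any tuple of nonzero prescribed values `ξ_{ij}` is
attained at some linearly independent `v_1, …, v_k ∈ ℝ^{2n}` under the standard
symplectic form. -/
theorem stmt16 (n k : ℕ) (hn : 2 ≤ n) (hk2 : 2 ≤ k) (hk : k ≤ n + 1)
    (ξ : Pairs k → ℝ) (hξ : ∀ p, ξ p ≠ 0) :
    ∃ v : Fin k → (Fin (2*n) → ℝ), LinearIndependent ℝ v ∧
      ∀ p : Pairs k, symp n (v p.1.1) (v p.1.2) = ξ p :=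
  stmt16_general n k hk2 hk ξ hξ
end
end

section
/- Let n ≥ 3 and k = n+2. For any real numbers ξ_{ij}, 1 ≤ i < j ≤ k, with ξ_{ij} ≠ 0 for all i < j, there exist vectors v_1, …, v_k ∈ ℝ^{2n} such that ⟨v_i, v_j⟩ = ξ_{ij} for all 1 ≤ i < j ≤ k. -/
open Matrix

noncomputable section

def clamp (n : ℕ) (v : Fin (2*n) → ℝ) : ℕ → ℝ := fun t => if h : t < 2*n then v ⟨t,h⟩ else 0

lemma Jmat_mulVec (n : ℕ) (w : Fin (2*n) → ℝ) (m : Fin (2*n)) :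
    (Jmat n).mulVec w m =
      if h : (m:ℕ) < n then w ⟨(m:ℕ)+n, by omega⟩ else -w ⟨(m:ℕ)-n, by omega⟩ := by
  rw [mulVec, dotProduct]
  split_ifs with h
  · rw [Finset.sum_eq_single (⟨(m:ℕ)+n, by omega⟩ : Fin (2*n))]
    · simp [Jmat]
    · intro l hl0 hl
      have hl' : (l:ℕ) ≠ (m:ℕ) + n := fun he => hl (Fin.ext he)
      have h1 := l.isLt; have h2 := m.isLt
      simp only [Jmat]
      rw [if_neg (by omega), if_neg (by omega), zero_mul]
    · simp
  · rw [Finset.sum_eq_single (⟨(m:ℕ)-n, by omega⟩ : Fin (2*n))]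
    · have h2 := m.isLt
      simp only [Jmat]
      rw [if_neg (by omega), if_pos (by omega),neg_one_mul]
    · intro l hl0 hl
      have hl' : (l:ℕ) ≠ (m:ℕ) - n := fun he => hl (Fin.ext he)
      have h1 := l.isLt; have h2 := m.isLt
      simp only [Jmat]
      rw [if_neg (by omega), if_neg (by omega), zero_mul]
    · simp

lemma symp_eq (n : ℕ) (v w : Fin (2*n) → ℝ) :
    symp n v w = ∑ t ∈ Finset.range n,
      (clamp n v t * clamp n w (t+n) - clamp n v (t+n) * clamp n w t) := by
  rw [symp, dotProduct]
  have key : ∀ m : Fin (2*n), v m * (Jmat n).mulVec w m =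
      (fun t : ℕ => if t < n then clamp n v t * clamp n w (t+n)
         else -(clamp n v t * clamp n w (t-n))) (m:ℕ) := by
    intro m
    rw [Jmat_mulVec]
    have h2 := m.isLt
    by_cases h : (m:ℕ) < n
    · rw [dif_pos h]
      simp only [if_pos h, clamp, dif_pos h2,
        dif_pos (show (m:ℕ)+n < 2*n by omega), Fin.eta]
    · rw [dif_neg h]
      simp only [if_neg h, clamp, dif_pos h2,
        dif_pos (show (m:ℕ)-n < 2*n by omega), Fin.eta]
      ring
  have h1 : (∑ m : Fin (2*n), v m * (Jmat n).mulVec w m) =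
      ∑ t ∈ Finset.range (2*n), (fun t : ℕ => if t < n then clamp n v t * clamp n w (t+n)
         else -(clamp n v t * clamp n w (t-n))) t := by
    rw [← Fin.sum_univ_eq_sum_range]
    exact Finset.sum_congr rfl (fun m _ => key m)
  rw [h1]
  rw [show 2*n = n + n from two_mul n, Finset.sum_range_add, ← Finset.sum_add_distrib]
  refine Finset.sum_congr rfl (fun t ht => ?_)
  have ht' : t < n := Finset.mem_range.mp ht
  rw [if_pos ht', if_neg (by omega)]
  have e1 : n + t - n = t := by omega
  have e2 : n + t = t + n := by omega
  rw [e1, e2]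
  ring

def Yf (n : ℕ) (ξ : Pairs (n+2) → ℝ) (i j : ℕ) : ℝ :=
  if h : i < j ∧ j < n+2 then ξ ⟨(⟨i, by omega⟩, ⟨j, h.2⟩), by exact h.1⟩ else 0

lemma Yf_eq (n : ℕ) (ξ : Pairs (n+2) → ℝ) (a b : Fin (n+2)) (hab : a < b) :
    Yf n ξ (a:ℕ) (b:ℕ) = ξ ⟨(a,b), hab⟩ := by
  have h : (a:ℕ) < (b:ℕ) ∧ (b:ℕ) < n+2 := ⟨hab, b.isLt⟩
  rw [Yf, dif_pos h]

lemma Yf_zero (n : ℕ) (ξ : Pairs (n+2) → ℝ) (i j : ℕ) (h : ¬ i < j) : Yf n ξ i j = 0 :=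
  dif_neg (by omega)

def Xf (n : ℕ) (a0 : ℝ) (i : Fin (n+2)) (m : ℕ) : ℝ :=
  if (i:ℕ) = n+1 then (if m = 0 then a0 else 0) else (if m = (i:ℕ) then 1 else 0)

def Ycf (n : ℕ) (ξ : Pairs (n+2) → ℝ) (a0 : ℝ) (i : Fin (n+2)) (t : ℕ) : ℝ :=
  if (i:ℕ) = n+1 then Yf n ξ t (n+1) + Yf n ξ 0 t * a0 else Yf n ξ t (i:ℕ)

def vf (n : ℕ) (ξ : Pairs (n+2) → ℝ) (a0 : ℝ) (i : Fin (n+2)) : Fin (2*n) → ℝ :=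
  fun m => if (m:ℕ) < n then Xf n a0 i (m:ℕ) else Ycf n ξ a0 i ((m:ℕ)-n)

lemma symp_vf (n : ℕ) (ξ : Pairs (n+2) → ℝ) (a0 : ℝ) (i j : Fin (n+2)) :
    symp n (vf n ξ a0 i) (vf n ξ a0 j) =
      ∑ t ∈ Finset.range n,
        (Xf n a0 i t * Ycf n ξ a0 j t - Ycf n ξ a0 i t * Xf n a0 j t) := by
  rw [symp_eq]
  refine Finset.sum_congr rfl (fun t ht => ?_)
  have ht' : t < n := Finset.mem_range.mp ht
  have c1 : ∀ k : Fin (n+2), clamp n (vf n ξ a0 k) t = Xf n a0 k t := by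
    intro k
    rw [clamp, dif_pos (by omega : t < 2*n), vf]
    simp only [if_pos ht']
  have c2 : ∀ k : Fin (n+2), clamp n (vf n ξ a0 k) (t+n) = Ycf n ξ a0 k t := by
    intro k
    rw [clamp, dif_pos (by omega : t+n < 2*n), vf]
    simp only [if_neg (show ¬ ((⟨t+n, by omega⟩ : Fin (2*n)) : ℕ) < n by simp), Nat.add_sub_cancel]
  rw [c1, c1, c2, c2]

/-- For `n ≥ 3` and `k = n+2`, any tuple of nonzero prescribed values `ξ_{ij}` is
attained at some `v_1, …, v_k ∈ ℝ^{2n}` under the standard symplectic form. -/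
theorem stmt17 (n : ℕ) (hn : 3 ≤ n)
    (ξ : Pairs (n+2) → ℝ) (hξ : ∀ p, ξ p ≠ 0) :
    ∃ v : Fin (n+2) → (Fin (2*n) → ℝ),
      ∀ p : Pairs (n+2), symp n (v p.1.1) (v p.1.2) = ξ p := by
  have h0n : Yf n ξ 0 n ≠ 0 := by
    rw [Yf, dif_pos ⟨by omega, by omega⟩]
    exact hξ _
  set a0 : ℝ := -(Yf n ξ n (n+1)) / Yf n ξ 0 n with ha0
  refine ⟨vf n ξ a0, ?_⟩
  rintro ⟨⟨i, j⟩, hij⟩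
  simp only at hij ⊢
  rw [symp_vf]
  have hjlt : (j:ℕ) < n+2 := j.isLt
  have hij' : (i:ℕ) < (j:ℕ) := hij
  rcases Nat.lt_or_ge (j:ℕ) (n+1) with hj | hj
  · -- both i, j ≤ n with j ≤ n, i < n
    have hi1 : (i:ℕ) ≠ n+1 := by omega
    have hj1 : (j:ℕ) ≠ n+1 := by omega
    have hx : ∀ t ∈ Finset.range n,
        (Xf n a0 i t * Ycf n ξ a0 j t - Ycf n ξ a0 i t * Xf n a0 j t)
        = ((if t = (i:ℕ) then Yf n ξ t (j:ℕ) else 0)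
            - (if t = (j:ℕ) then Yf n ξ t (i:ℕ) else 0)) := by
      intro t ht
      simp only [Xf, Ycf, if_neg hi1, if_neg hj1]
      split_ifs <;> ring
    rw [Finset.sum_congr rfl hx, Finset.sum_sub_distrib,
        Finset.sum_ite_eq' (Finset.range n) ((i:ℕ)), Finset.sum_ite_eq' (Finset.range n) ((j:ℕ))]
    have hz : Yf n ξ (j:ℕ) (i:ℕ) = 0 := Yf_zero _ _ _ _ (by omega)
    rw [hz, if_pos (Finset.mem_range.mpr (by omega)), ite_self, sub_zero]
    exact Yf_eq n ξ i j hij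
  · -- j = n+1
    have hjv : (j:ℕ) = n+1 := by omega
    have hi1 : (i:ℕ) ≠ n+1 := by omega
    have hx : ∀ t ∈ Finset.range n,
        (Xf n a0 i t * Ycf n ξ a0 j t - Ycf n ξ a0 i t * Xf n a0 j t)
        = ((if t = (i:ℕ) then Yf n ξ t (n+1) + Yf n ξ 0 t * a0 else 0)
            - (if t = 0 then Yf n ξ t (i:ℕ) * a0 else 0)) := by
      intro t ht
      simp only [Xf, Ycf, if_neg hi1, if_pos hjv]
      split_ifs <;> ring
    rw [Finset.sum_congr rfl hx, Finset.sum_sub_distrib,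
        Finset.sum_ite_eq' (Finset.range n) ((i:ℕ)), Finset.sum_ite_eq' (Finset.range n) 0]
    have h00 : (if (0:ℕ) ∈ Finset.range n then Yf n ξ 0 (i:ℕ) * a0 else 0)
        = Yf n ξ 0 (i:ℕ) * a0 := if_pos (Finset.mem_range.mpr (by omega))
    rw [h00]
    rcases Nat.lt_or_ge (i:ℕ) n with hi | hi
    · rw [if_pos (Finset.mem_range.mpr hi)]
      have goal1 : Yf n ξ (i:ℕ) (n+1) = ξ ⟨(i,j), hij⟩ := by
        rw [← hjv]; exact Yf_eq n ξ i j hij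
      rw [← goal1]; ring
    · -- i = n
      have hiv : (i:ℕ) = n := by omega
      rw [if_neg (by rw [Finset.mem_range]; omega), hiv, zero_sub]
      have goal1 : Yf n ξ n (n+1) = ξ ⟨(i,j), hij⟩ := by
        have h := Yf_eq n ξ i j hij
        rwa [hiv, hjv] at h
      rw [← goal1, ha0]
      field_simp
end
end
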